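/- Let L and L̃ be symmetric positive definite m×m real matrices with the same correlation matrix, i.e., L_{ij}/√(L_{ii}L_{jj}) = L̃_{ij}/√(L̃_{ii}L̃_{jj}) for all i, j. Let K := L(L + I)^{-1}. Then the Kullback–Leibler divergence between the corresponding determinantal point processes satisfies D[P_L : P_{L̃}] := ∑_{A ⊆ {1,…,m}} P_L(A) · log( P_L(A)/P_{L̃}(A) ) = ∑_{a=1}^m K_{aa}·(log L_{aa} − log L̃_{aa}) − log det(L + I) + log det(L̃ + I). -/

import Mathlib

/-- The determinant of the principal submatrix of `M` with rows and columns in `A`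
(equal to `1` when `A = ∅`). -/
noncomputable def pminor {m : ℕ} (M : Matrix (Fin m) (Fin m) ℝ) (A : Finset (Fin m)) : ℝ :=
  (M.submatrix (fun i : A => (i : Fin m)) (fun j : A => (j : Fin m))).det

/-- The `L`-ensemble determinantal point process. -/
noncomputable def dppP {m : ℕ} (L : Matrix (Fin m) (Fin m) ℝ) (A : Finset (Fin m)) : ℝ :=
  pminor L A / (L + 1).det

/-!
Equal correlation matrices mean `L' = D L D` for the positive diagonal matrix
`D = diag (√(L'ᵢᵢ / Lᵢᵢ))`, so every principal minor scales as
`det L'_A = (∏_{i ∈ A} L'ᵢᵢ / Lᵢᵢ) det L_A`. Hence `log (P_L(A) / P_L'(A))` is the additive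
function `∑_{i ∈ A} (log Lᵢᵢ - log L'ᵢᵢ)` plus a constant, and its `P_L`-expectation only needs
the normalisation `∑_A det L_A = det (L + I)` and the inclusion probabilities
`P_L(a ∈ A) = K_aa`. Both come from expanding `det (M + diag d)` into principal minors.
-/

namespace Matrix

variable {n R : Type*} [Fintype n] [DecidableEq n] [CommRing R]

theorem det_of_piecewise_one (M : Matrix n n R) (s : Finset n) :
    (of (s.piecewise M (1 : Matrix n n R))).det = (M.submatrix ((↑) : s → n) (↑)).det := by
  rw [twoBlockTriangular_det _ (· ∈ s) fun i hi j hj => by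
    simp [Finset.piecewise, hi, one_apply_ne (ne_of_mem_of_not_mem hj hi).symm]]
  have hs : (of (s.piecewise M (1 : Matrix n n R))).toSquareBlockProp (· ∈ s)
      = M.submatrix (↑) (↑) := by
    ext i j
    simp [toSquareBlockProp, Finset.piecewise]
  have hsc : (of (s.piecewise M (1 : Matrix n n R))).toSquareBlockProp (· ∉ s) = 1 := by
    ext i j
    simp [toSquareBlockProp, Finset.piecewise, i.2, one_apply, Subtype.ext_iff]
  rw [hs, hsc, det_one, mul_one]
  congr!

theorem det_add_diagonal (M : Matrix n n R) (d : n → R) :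
    (M + diagonal d).det =
      ∑ s : Finset n, (∏ i ∈ sᶜ, d i) * (M.submatrix ((↑) : s → n) (↑)).det := by
  have hrows : ∀ s : Finset n, s.piecewise M (diagonal d) =
      sᶜ.piecewise (fun i => d i • s.piecewise M (1 : Matrix n n R) i)
        (s.piecewise M (1 : Matrix n n R)) := by
    intro s
    ext i j
    by_cases hi : i ∈ s <;> simp [Finset.piecewise, hi, diagonal, one_apply]
  change detRowAlternating.toMultilinearMap ((fun i => M i) + fun i => diagonal d i) = _
  rw [MultilinearMap.map_add_univ]
  refine Finset.sum_congr rfl fun s _ => ?_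
  rw [hrows, MultilinearMap.map_piecewise_smul, smul_eq_mul]
  exact congrArg _ (det_of_piecewise_one M s)

theorem sum_det_submatrix (M : Matrix n n R) :
    ∑ s : Finset n, (M.submatrix ((↑) : s → n) (↑)).det = (M + 1).det := by
  simpa using (det_add_diagonal M 1).symm

/-- Zeroing the `a`-th diagonal entry of the added identity keeps exactly the minors containing
`a`; that row being linear, the determinant drops by the `(a, a)` cofactor. -/
theorem sum_det_submatrix_of_mem (M : Matrix n n R) (a : n) :
    ∑ s : Finset n with a ∈ s, (M.submatrix ((↑) : s → n) (↑)).det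
      = (M + 1).det - (M + 1).adjugate a a := by
  have hprod : ∀ s : Finset n, ∏ i ∈ sᶜ, Function.update (1 : n → R) a 0 i
      = if a ∈ s then 1 else 0 := by
    intro s
    simp [Function.update_apply]
  have hdiag : M + diagonal (Function.update 1 a 0)
      = (M + 1).updateRow a ((M + 1) a + (-1 : R) • Pi.single a 1) := by
    ext i j
    rcases eq_or_ne i a with rfl | hi
    · by_cases hij : i = j <;> simp [hij, eq_comm]
    · simp [hi, diagonal_apply, one_apply]
  have hexpand := det_add_diagonal M (Function.update 1 a 0)
  simp only [hprod, ite_mul, one_mul, zero_mul, ← Finset.sum_filter] at hexpand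
  rw [← hexpand, hdiag, det_updateRow_add, det_updateRow_smul, updateRow_eq_self,
    adjugate_apply]
  ring

theorem mul_add_one_inv_eq_one_sub (A : Matrix n n R) (hA : IsUnit (A + 1).det) :
    A * (A + 1)⁻¹ = 1 - (A + 1)⁻¹ := by
  rw [eq_sub_iff_add_eq]
  simpa only [Matrix.add_mul, Matrix.one_mul] using mul_nonsing_inv (A + 1) hA

theorem eq_diagonal_mul_mul_diagonal_of_same_correlation {L L' : Matrix n n ℝ}
    (hL : ∀ i, 0 < L i i) (hL' : ∀ i, 0 < L' i i)
    (hcorr : ∀ i j, L i j / √(L i i * L j j) = L' i j / √(L' i i * L' j j)) :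
    L' = diagonal (fun i => √(L' i i) / √(L i i)) * L
      * diagonal (fun i => √(L' i i) / √(L i i)) := by
  ext i j
  have h := hcorr i j
  have hs := fun i => Real.sqrt_pos.mpr (hL i)
  have hs' := fun i => Real.sqrt_pos.mpr (hL' i)
  rw [Real.sqrt_mul (hL i).le, Real.sqrt_mul (hL' i).le,
    div_eq_div_iff (mul_pos (hs i) (hs j)).ne' (mul_pos (hs' i) (hs' j)).ne'] at h
  simp only [mul_diagonal, diagonal_mul]
  field_simp [(hs i).ne', (hs j).ne']
  linear_combination -h

end Matrix

open Matrix

variable {m : ℕ} {L L' : Matrix (Fin m) (Fin m) ℝ}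

theorem pminor_pos (hL : L.PosDef) (A : Finset (Fin m)) : 0 < pminor L A :=
  (hL.submatrix Subtype.val_injective).det_pos

theorem det_add_one_pos (hL : L.PosDef) : 0 < (L + 1).det :=
  (hL.add_posSemidef PosSemidef.one).det_pos

theorem pminor_diagonal_mul_mul_diagonal (d e : Fin m → ℝ) (M : Matrix (Fin m) (Fin m) ℝ)
    (A : Finset (Fin m)) :
    pminor (diagonal d * M * diagonal e) A = (∏ i ∈ A, d i * e i) * pminor M A := by
  have hsub : (diagonal d * M * diagonal e).submatrix ((↑) : A → Fin m) (↑)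
      = diagonal (fun i : A => d i) * M.submatrix (↑) (↑) * diagonal (fun i : A => e i) := by
    ext i j
    simp [mul_diagonal, diagonal_mul]
  rw [pminor, hsub, det_mul, det_mul, det_diagonal, det_diagonal, Finset.prod_mul_distrib,
    ← Finset.prod_coe_sort A d, ← Finset.prod_coe_sort A e, pminor]
  ring

theorem pminor_of_same_correlation (hL : ∀ i, 0 < L i i) (hL' : ∀ i, 0 < L' i i)
    (hcorr : ∀ i j, L i j / √(L i i * L j j) = L' i j / √(L' i i * L' j j))
    (A : Finset (Fin m)) :
    pminor L' A = (∏ i ∈ A, L' i i / L i i) * pminor L A := by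
  conv_lhs => rw [eq_diagonal_mul_mul_diagonal_of_same_correlation hL hL' hcorr]
  rw [pminor_diagonal_mul_mul_diagonal]
  congr 1
  refine Finset.prod_congr rfl fun i _ => ?_
  rw [div_mul_div_comm, Real.mul_self_sqrt (hL' i).le, Real.mul_self_sqrt (hL i).le]

theorem sum_dppP (hdet : (L + 1).det ≠ 0) : ∑ A, dppP L A = 1 := by
  simp only [dppP, pminor, ← Finset.sum_div]
  exact (div_eq_one_iff_eq hdet).mpr (sum_det_submatrix L)

theorem sum_dppP_of_mem (hdet : (L + 1).det ≠ 0) (a : Fin m) :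
    ∑ A with a ∈ A, dppP L A = (L * (L + 1)⁻¹) a a := by
  simp only [dppP, pminor, ← Finset.sum_div]
  rw [sum_det_submatrix_of_mem, mul_add_one_inv_eq_one_sub L hdet.isUnit, Matrix.sub_apply,
    one_apply_eq, inv_def, Matrix.smul_apply, smul_eq_mul, Ring.inverse_eq_inv']
  field_simp

theorem sum_dppP_mul_sum (hdet : (L + 1).det ≠ 0) (c : Fin m → ℝ) :
    ∑ A, dppP L A * ∑ i ∈ A, c i = ∑ i, (L * (L + 1)⁻¹) i i * c i := by
  calc ∑ A, dppP L A * ∑ i ∈ A, c i = ∑ i, ∑ A with i ∈ A, dppP L A * c i := by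
        simp only [Finset.mul_sum]
        exact Finset.sum_comm' (by simp)
    _ = ∑ i, (L * (L + 1)⁻¹) i i * c i := by
        simp only [← Finset.sum_mul, sum_dppP_of_mem hdet]

theorem log_dppP_div_of_same_correlation (hL : L.PosDef) (hL' : L'.PosDef)
    (hcorr : ∀ i j, L i j / √(L i i * L j j) = L' i j / √(L' i i * L' j j))
    (A : Finset (Fin m)) :
    Real.log (dppP L A / dppP L' A) = ∑ i ∈ A, (Real.log (L i i) - Real.log (L' i i))
      + (Real.log (L' + 1).det - Real.log (L + 1).det) := by
  have hdiag : ∀ i, 0 < L i i := fun _ => hL.diag_pos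
  have hdiag' : ∀ i, 0 < L' i i := fun _ => hL'.diag_pos
  have hdet := det_add_one_pos hL
  have hdet' := det_add_one_pos hL'
  have hfactor : ∀ i, 0 < L i i / L' i i := fun i => div_pos (hdiag i) (hdiag' i)
  have hratio : dppP L A / dppP L' A
      = (∏ i ∈ A, L i i / L' i i) * ((L' + 1).det / (L + 1).det) := by
    have hminor := pminor_pos hL A
    have hprod := Finset.prod_pos fun i (_ : i ∈ A) => hdiag i
    have hprod' := Finset.prod_pos fun i (_ : i ∈ A) => hdiag' i
    rw [dppP, dppP, pminor_of_same_correlation hdiag hdiag' hcorr, Finset.prod_div_distrib,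
      Finset.prod_div_distrib]
    field_simp
  rw [hratio, Real.log_mul (Finset.prod_pos fun i _ => hfactor i).ne' (div_pos hdet' hdet).ne',
    Real.log_prod fun i _ => (hfactor i).ne', Real.log_div hdet'.ne' hdet.ne']
  simp only [Real.log_div (hdiag _).ne' (hdiag' _).ne']

theorem dpp_kl_divergence_same_correlation_general (m : ℕ) (L L' : Matrix (Fin m) (Fin m) ℝ)
    (hL : L.PosDef)
    (hL' : L'.PosDef)
    (hcorr : ∀ i j, L i j / Real.sqrt (L i i * L j j)
      = L' i j / Real.sqrt (L' i i * L' j j))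
    (K : Matrix (Fin m) (Fin m) ℝ) (hK : K = L * (L + 1)⁻¹) :
    ∑ A : Finset (Fin m), dppP L A * Real.log (dppP L A / dppP L' A)
      = (∑ a : Fin m, K a a * (Real.log (L a a) - Real.log (L' a a)))
        - Real.log (L + 1).det + Real.log (L' + 1).det := by
  have hdet := (det_add_one_pos hL).ne'
  simp only [log_dppP_div_of_same_correlation hL hL' hcorr, mul_add, Finset.sum_add_distrib,
    ← Finset.sum_mul, sum_dppP_mul_sum hdet, sum_dppP hdet, hK]
  ring

theorem dpp_kl_divergence_same_correlation (m : ℕ) (L L' : Matrix (Fin m) (Fin m) ℝ)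
    (hsymm : L.IsSymm) (hL : L.PosDef)
    (hsymm' : L'.IsSymm) (hL' : L'.PosDef)
    (hcorr : ∀ i j, L i j / Real.sqrt (L i i * L j j)
      = L' i j / Real.sqrt (L' i i * L' j j))
    (K : Matrix (Fin m) (Fin m) ℝ) (hK : K = L * (L + 1)⁻¹) :
    ∑ A : Finset (Fin m), dppP L A * Real.log (dppP L A / dppP L' A)
      = (∑ a : Fin m, K a a * (Real.log (L a a) - Real.log (L' a a)))
        - Real.log (L + 1).det + Real.log (L' + 1).det :=
  dpp_kl_divergence_same_correlation_general m L L' hL hL' hcorr K hK
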